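/- Let S be a distributive subalgebra of RCC5 and let Γ be an RCC5 network over S (i.e., every constraint R_ij belongs to S). If Γ is path-consistent, then Γ is consistent, i.e., Γ has a solution by regions. -/

import Mathlib

/-- A *region* is a nonempty regular closed subset of the Euclidean plane `ℝ × ℝ`. -/
def Region : Type :=
  {x : Set (ℝ × ℝ) // x.Nonempty ∧ x = closure (interior x)}

namespace Region

/-- Part-of: `x P y` iff `x ⊆ y`. -/
def P (x y : Region) : Prop := x.1 ⊆ y.1

/-- Overlap: `x O y` iff some region is a common part of `x` and `y`. -/
def O (x y : Region) : Prop := ∃ z : Region, z.1 ⊆ x.1 ∧ z.1 ⊆ y.1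

/-- Connection: `x C y` iff `x ∩ y ≠ ∅`. -/
def C (x y : Region) : Prop := (x.1 ∩ y.1).Nonempty

end Region

/-- The five basic RCC5 relations. -/
inductive RCC5Basic : Type
  | DR | PO | PP | PPi | EQ
deriving DecidableEq

namespace RCC5Basic

/-- Interpretation of the basic RCC5 relations on regions. -/
def interp : RCC5Basic → Region → Region → Prop
  | DR, x, y => ¬ Region.O x y
  | PO, x, y => Region.O x y ∧ ¬ x.1 ⊆ y.1 ∧ ¬ y.1 ⊆ x.1
  | PP, x, y => x.1 ⊆ y.1 ∧ x ≠ y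
  | PPi, x, y => y.1 ⊆ x.1 ∧ x ≠ y
  | EQ, x, y => x = y

/-- Converse of a basic RCC5 relation. -/
def conv : RCC5Basic → RCC5Basic
  | DR => DR | PO => PO | PP => PPi | PPi => PP | EQ => EQ

end RCC5Basic

/-- An RCC5 relation is a union of basic relations, identified with a subset of `B₅`. -/
abbrev RCC5Rel : Type := Set RCC5Basic

namespace RCC5Rel

/-- A pair of regions is an instance of an RCC5 relation iff it is an instance of one of
its basic relations. -/
def interp (R : RCC5Rel) (x y : Region) : Prop := ∃ b ∈ R, RCC5Basic.interp b x y

/-- Converse of an RCC5 relation. -/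
def conv (R : RCC5Rel) : RCC5Rel := {b | RCC5Basic.conv b ∈ R}

/-- Weak composition: `γ ∈ R ⋄ S` iff `γ` intersects the relational composition `R ∘ S`. -/
def comp (R S : RCC5Rel) : RCC5Rel :=
  {γ | ∃ x z : Region, RCC5Basic.interp γ x z ∧
        ∃ y : Region, RCC5Rel.interp R x y ∧ RCC5Rel.interp S y z}

lemma conv_univ : RCC5Rel.conv Set.univ = Set.univ := by
  ext b; simp [RCC5Rel.conv]

end RCC5Rel

/-- A distributive subalgebra of RCC5: contains all basic relations, is closed under
converse, weak composition and (nonempty) intersection, and weak composition distributes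
over nonempty intersections. -/
def IsDistributiveSubalgebra (𝒮 : Set RCC5Rel) : Prop :=
  (∀ b : RCC5Basic, ({b} : RCC5Rel) ∈ 𝒮) ∧
  (∀ R ∈ 𝒮, RCC5Rel.conv R ∈ 𝒮) ∧
  (∀ R ∈ 𝒮, ∀ S ∈ 𝒮, RCC5Rel.comp R S ∈ 𝒮) ∧
  (∀ R ∈ 𝒮, ∀ S ∈ 𝒮, (R ∩ S).Nonempty → R ∩ S ∈ 𝒮) ∧
  (∀ R ∈ 𝒮, ∀ T₁ ∈ 𝒮, ∀ T₂ ∈ 𝒮, (T₁ ∩ T₂).Nonempty →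
    RCC5Rel.comp R (T₁ ∩ T₂) = RCC5Rel.comp R T₁ ∩ RCC5Rel.comp R T₂ ∧
    RCC5Rel.comp (T₁ ∩ T₂) R = RCC5Rel.comp T₁ R ∩ RCC5Rel.comp T₂ R)

/-- An RCC5 (constraint) network on `n` variables. -/
structure RCC5Network (n : ℕ) where
  rel : Fin n → Fin n → RCC5Rel
  conv_rel : ∀ i j, rel j i = RCC5Rel.conv (rel i j)
  diag : ∀ i, rel i i = {RCC5Basic.EQ}

namespace RCC5Network

variable {n : ℕ}

/-- A solution of a network assigns regions to the variables satisfying all constraints. -/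
def IsSolution (Γ : RCC5Network n) (a : Fin n → Region) : Prop :=
  ∀ i j, RCC5Rel.interp (Γ.rel i j) (a i) (a j)

/-- A network is consistent if it has a solution. -/
def Consistent (Γ : RCC5Network n) : Prop := ∃ a, Γ.IsSolution a

/-- `Γ` entails the constraint `(v_i S v_j)`. -/
def Entails (Γ : RCC5Network n) (i j : Fin n) (S : RCC5Rel) : Prop :=
  ∀ a, Γ.IsSolution a → RCC5Rel.interp S (a i) (a j)

/-- All-different: consistent and no two distinct variables are forced to be equal. -/
def AllDifferent (Γ : RCC5Network n) : Prop :=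
  Γ.Consistent ∧ ∀ i j, i ≠ j → ¬ Γ.Entails i j {RCC5Basic.EQ}

/-- Path-consistency. -/
def PathConsistent (Γ : RCC5Network n) : Prop :=
  ∀ i j k, (Γ.rel i j).Nonempty ∧ Γ.rel i j ⊆ RCC5Rel.comp (Γ.rel i k) (Γ.rel k j)

/-- The network is over the subclass `𝒮`. -/
def Over (Γ : RCC5Network n) (𝒮 : Set RCC5Rel) : Prop := ∀ i j, Γ.rel i j ∈ 𝒮

/-- `Γ'` refines `Γ`. -/
def Refines (Γ' Γ : RCC5Network n) : Prop := ∀ i j, Γ'.rel i j ⊆ Γ.rel i j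

/-- `Γp` is the a-closure of `Γ`: the pointwise-largest path-consistent refinement. -/
def IsAClosure (Γp Γ : RCC5Network n) : Prop :=
  Γp.PathConsistent ∧ Γp.Refines Γ ∧
    ∀ Γ' : RCC5Network n, Γ'.PathConsistent → Γ'.Refines Γ → Γ'.Refines Γp

/-- A scenario of (the restriction of) `Γ` on the variable set `V`. -/
def IsScenarioOn (Γ : RCC5Network n) (V : Set (Fin n)) (s : Fin n → Fin n → RCC5Basic) : Prop :=
  (∀ i ∈ V, ∀ j ∈ V, s i j ∈ Γ.rel i j) ∧
  (∀ i ∈ V, ∀ j ∈ V, s j i = RCC5Basic.conv (s i j)) ∧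
  (∀ i ∈ V, s i i = RCC5Basic.EQ)

/-- Consistency of a scenario on a variable set `V`. -/
def ScenarioConsistentOn (V : Set (Fin n)) (s : Fin n → Fin n → RCC5Basic) : Prop :=
  ∃ a : Fin n → Region, ∀ i ∈ V, ∀ j ∈ V, RCC5Basic.interp (s i j) (a i) (a j)

/-- Weakly globally consistent: every consistent scenario of a restriction of `Γ` extends
to a consistent scenario of `Γ`. -/
def WeaklyGloballyConsistent (Γ : RCC5Network n) : Prop :=
  ∀ V : Set (Fin n), V.Nonempty → ∀ s, Γ.IsScenarioOn V s → ScenarioConsistentOn V s →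
    ∃ s', Γ.IsScenarioOn Set.univ s' ∧ ScenarioConsistentOn Set.univ s' ∧
      ∀ i ∈ V, ∀ j ∈ V, s' i j = s i j

/-- Minimality: every basic relation in every constraint is feasible. -/
def Minimal (Γ : RCC5Network n) : Prop :=
  ∀ i j, i ≠ j → ∀ α ∈ Γ.rel i j,
    ∃ a, Γ.IsSolution a ∧ RCC5Basic.interp α (a i) (a j)

/-- Weak composition `CT` along a path `u :: l` of variables. -/
def pathCT (Γ : RCC5Network n) : Fin n → List (Fin n) → RCC5Rel
  | _, [] => Set.univ
  | u, [v] => Γ.rel u v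
  | u, v :: w :: rest => RCC5Rel.comp (Γ.rel u v) (pathCT Γ v (w :: rest))

/-- The network obtained from `Γ` by replacing the constraints between `v_i` and `v_j`
(`i ≠ j`) by the universal relation. -/
def removeEdge (Γ : RCC5Network n) (i j : Fin n) : RCC5Network n where
  rel a b := if i ≠ j ∧ ((a = i ∧ b = j) ∨ (a = j ∧ b = i)) then Set.univ else Γ.rel a b
  conv_rel a b := by
    by_cases h : i ≠ j ∧ ((a = i ∧ b = j) ∨ (a = j ∧ b = i))
    · have h' : i ≠ j ∧ ((b = i ∧ a = j) ∨ (b = j ∧ a = i)) := by tauto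
      simp only [if_pos h, if_pos h', RCC5Rel.conv_univ]
    · have h' : ¬(i ≠ j ∧ ((b = i ∧ a = j) ∨ (b = j ∧ a = i))) := by tauto
      simp only [if_neg h, if_neg h']
      exact Γ.conv_rel a b
  diag a := by
    have h : ¬(i ≠ j ∧ ((a = i ∧ a = j) ∨ (a = j ∧ a = i))) := by
      rintro ⟨hij, ⟨h1, h2⟩ | ⟨h1, h2⟩⟩
      · exact hij (h1.symm.trans h2)
      · exact hij (h2.symm.trans h1)
    simp only [if_neg h]
    exact Γ.diag a

/-- A constraint `(v_i R_ij v_j)` is redundant in `Γ` if the network obtained by replacing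
it (and its converse) with the universal relation entails it. -/
def Redundant (Γ : RCC5Network n) (i j : Fin n) : Prop :=
  (Γ.removeEdge i j).Entails i j (Γ.rel i j)

open Classical in
/-- The core of `Γ`: every redundant constraint (and its converse) is replaced by the
universal relation. -/
noncomputable def core (Γ : RCC5Network n) : RCC5Network n where
  rel a b := if a ≠ b ∧ (Γ.Redundant a b ∨ Γ.Redundant b a) then Set.univ else Γ.rel a b
  conv_rel a b := by
    by_cases h : a ≠ b ∧ (Γ.Redundant a b ∨ Γ.Redundant b a)
    · have h' : b ≠ a ∧ (Γ.Redundant b a ∨ Γ.Redundant a b) := ⟨h.1.symm, h.2.symm⟩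
      simp only [if_pos h, if_pos h', RCC5Rel.conv_univ]
    · have h' : ¬(b ≠ a ∧ (Γ.Redundant b a ∨ Γ.Redundant a b)) := by
        intro hc; exact h ⟨hc.1.symm, hc.2.symm⟩
      simp only [if_neg h, if_neg h']
      exact Γ.conv_rel a b
  diag a := by
    have h : ¬(a ≠ a ∧ (Γ.Redundant a a ∨ Γ.Redundant a a)) := fun hc => hc.1 rfl
    simp only [if_neg h]
    exact Γ.diag a

end RCC5Network

/-- A path from `i` to `j` in a network on `n` variables: a nonempty list `l` of successive
vertices (so the path is `i :: l`), with consecutive vertices distinct, ending at `j`. -/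
def IsPathFrom {n : ℕ} (i j : Fin n) (l : List (Fin n)) : Prop :=
  l ≠ [] ∧ l.getLast? = some j ∧ List.Chain (· ≠ ·) i l

/-- The path `u :: l` never traverses the edge `{i, j}` (in either direction). -/
def AvoidsEdge {n : ℕ} (i j : Fin n) (u : Fin n) (l : List (Fin n)) : Prop :=
  List.Chain (fun a b => ¬(a = i ∧ b = j) ∧ ¬(a = j ∧ b = i)) u l

/-! ### Auxiliary development -/

namespace RCC5Aux
open Set RCC5Basic

/-! #### Generic region lemmas -/

lemma region_ext {x y : Region} (h : x.1 = y.1) : x = y := Subtype.ext h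

lemma region_eq_iff {x y : Region} : x = y ↔ x.1 ⊆ y.1 ∧ y.1 ⊆ x.1 := by
  constructor
  · rintro rfl; exact ⟨Subset.rfl, Subset.rfl⟩
  · rintro ⟨h1, h2⟩; exact region_ext (Subset.antisymm h1 h2)

lemma O_of_sub {x y : Region} (h : x.1 ⊆ y.1) : Region.O x y := ⟨x, Subset.rfl, h⟩

lemma O_of_sub' {x y : Region} (h : y.1 ⊆ x.1) : Region.O x y := ⟨y, h, Subset.rfl⟩

lemma O_symm {x y : Region} (h : Region.O x y) : Region.O y x := by
  obtain ⟨z, h1, h2⟩ := h; exact ⟨z, h2, h1⟩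

lemma O_mono_right {x y z : Region} (h : Region.O x y) (hyz : y.1 ⊆ z.1) :
    Region.O x z := by obtain ⟨w, h1, h2⟩ := h; exact ⟨w, h1, h2.trans hyz⟩

lemma O_mono_left {x y z : Region} (h : Region.O x y) (hxz : x.1 ⊆ z.1) :
    Region.O z y := by obtain ⟨w, h1, h2⟩ := h; exact ⟨w, h1.trans hxz, h2⟩

lemma O_of_mid {x y z : Region} (h1 : y.1 ⊆ x.1) (h2 : y.1 ⊆ z.1) :
    Region.O x z := ⟨y, h1, h2⟩

lemma iff_DR (x y : Region) : RCC5Basic.interp DR x y ↔ ¬ Region.O x y := Iff.rfl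

lemma iff_PO (x y : Region) :
    RCC5Basic.interp PO x y ↔ Region.O x y ∧ ¬ x.1 ⊆ y.1 ∧ ¬ y.1 ⊆ x.1 := Iff.rfl

lemma iff_PP (x y : Region) :
    RCC5Basic.interp PP x y ↔ x.1 ⊆ y.1 ∧ ¬ y.1 ⊆ x.1 := by
  constructor
  · rintro ⟨h1, h2⟩
    exact ⟨h1, fun h3 => h2 (region_ext (Subset.antisymm h1 h3))⟩
  · rintro ⟨h1, h2⟩
    exact ⟨h1, fun h3 => h2 (h3 ▸ Subset.rfl)⟩

lemma iff_PPi (x y : Region) :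
    RCC5Basic.interp PPi x y ↔ y.1 ⊆ x.1 ∧ ¬ x.1 ⊆ y.1 := by
  constructor
  · rintro ⟨h1, h2⟩
    exact ⟨h1, fun h3 => h2 (region_ext (Subset.antisymm h3 h1))⟩
  · rintro ⟨h1, h2⟩
    exact ⟨h1, fun h3 => h2 (h3 ▸ Subset.rfl)⟩

lemma iff_EQ (x y : Region) :
    RCC5Basic.interp EQ x y ↔ x.1 ⊆ y.1 ∧ y.1 ⊆ x.1 := by
  show x = y ↔ _
  rw [region_eq_iff]

/-! #### The RCC5 composition table -/

instance : Fintype RCC5Basic :=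
  ⟨{DR, PO, PP, PPi, EQ}, by intro x; cases x <;> decide⟩

def tab : RCC5Basic → RCC5Basic → Finset RCC5Basic
  | DR, DR => {DR,PO,PP,PPi,EQ} | DR, PO => {DR,PO,PP} | DR, PP => {DR,PO,PP}
  | DR, PPi => {DR} | DR, EQ => {DR}
  | PO, DR => {DR,PO,PPi} | PO, PO => {DR,PO,PP,PPi,EQ} | PO, PP => {PO,PP}
  | PO, PPi => {DR,PO,PPi} | PO, EQ => {PO}
  | PP, DR => {DR} | PP, PO => {DR,PO,PP} | PP, PP => {PP}
  | PP, PPi => {DR,PO,PP,PPi,EQ} | PP, EQ => {PP}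
  | PPi, DR => {DR,PO,PPi} | PPi, PO => {PO,PPi} | PPi, PP => {PO,PP,PPi,EQ}
  | PPi, PPi => {PPi} | PPi, EQ => {PPi}
  | EQ, b => {b}

set_option maxHeartbeats 1000000 in
/-- Completeness of the table: any realizable triangle is in the table. -/
lemma complete {a b c : RCC5Basic} {x y z : Region}
    (ha : RCC5Basic.interp a x y) (hb : RCC5Basic.interp b y z)
    (hc : RCC5Basic.interp c x z) : c ∈ tab a b := by
  have t1 : x.1 ⊆ y.1 → y.1 ⊆ z.1 → x.1 ⊆ z.1 := fun h1 h2 => h1.trans h2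
  have t2 : y.1 ⊆ x.1 → x.1 ⊆ z.1 → y.1 ⊆ z.1 := fun h1 h2 => h1.trans h2
  have t3 : x.1 ⊆ z.1 → z.1 ⊆ y.1 → x.1 ⊆ y.1 := fun h1 h2 => h1.trans h2
  have t4 : z.1 ⊆ x.1 → x.1 ⊆ y.1 → z.1 ⊆ y.1 := fun h1 h2 => h1.trans h2
  have t5 : y.1 ⊆ z.1 → z.1 ⊆ x.1 → y.1 ⊆ x.1 := fun h1 h2 => h1.trans h2
  have t6 : z.1 ⊆ y.1 → y.1 ⊆ x.1 → z.1 ⊆ x.1 := fun h1 h2 => h1.trans h2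
  have o1 : x.1 ⊆ y.1 → Region.O x y := O_of_sub
  have o2 : y.1 ⊆ x.1 → Region.O x y := O_of_sub'
  have o3 : y.1 ⊆ z.1 → Region.O y z := O_of_sub
  have o4 : z.1 ⊆ y.1 → Region.O y z := O_of_sub'
  have o5 : x.1 ⊆ z.1 → Region.O x z := O_of_sub
  have o6 : z.1 ⊆ x.1 → Region.O x z := O_of_sub'
  have m1 : Region.O x y → y.1 ⊆ z.1 → Region.O x z := O_mono_right
  have m2 : Region.O x y → x.1 ⊆ z.1 → Region.O y z := fun h hs => O_symm (O_mono_left h hs)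
  have m3 : Region.O x z → z.1 ⊆ y.1 → Region.O x y := O_mono_right
  have m4 : Region.O x z → x.1 ⊆ y.1 → Region.O y z := fun h hs => O_mono_left h hs
  have m5 : Region.O y z → z.1 ⊆ x.1 → Region.O x y := fun h hs => O_symm (O_mono_right h hs)
  have m6 : Region.O y z → y.1 ⊆ x.1 → Region.O x z := fun h hs => O_mono_left h hs
  have c1 : y.1 ⊆ x.1 → y.1 ⊆ z.1 → Region.O x z := O_of_mid
  have c2 : x.1 ⊆ y.1 → x.1 ⊆ z.1 → Region.O y z := O_of_mid
  have c3 : z.1 ⊆ x.1 → z.1 ⊆ y.1 → Region.O x y := O_of_mid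
  cases a <;> cases b <;> cases c <;>
    simp only [iff_DR, iff_PO, iff_PP, iff_PPi, iff_EQ] at ha hb hc
  all_goals try decide
  case DR.PO.PPi => exact absurd (m5 hb.1 hc.1) ha
  case DR.PO.EQ => exact absurd (m5 hb.1 hc.2) ha
  case DR.PP.PPi => exact absurd (o2 (t5 hb.1 hc.1)) ha
  case DR.PP.EQ => exact absurd (o2 (t5 hb.1 hc.2)) ha
  case DR.PPi.PO => exact absurd (m3 hc.1 hb.1) ha
  case DR.PPi.PP => exact absurd (o1 (t3 hc.1 hb.1)) ha
  case DR.PPi.PPi => exact absurd (m3 (o6 hc.1) hb.1) ha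
  case DR.PPi.EQ => exact absurd (o1 (t3 hc.1 hb.1)) ha
  case DR.EQ.PO => exact absurd (m3 hc.1 hb.2) ha
  case DR.EQ.PP => exact absurd (o1 (t3 hc.1 hb.2)) ha
  case DR.EQ.PPi => exact absurd (o2 (t5 hb.1 hc.1)) ha
  case DR.EQ.EQ => exact absurd (o1 (t3 hc.1 hb.2)) ha
  case PO.DR.PP => exact absurd (m2 ha.1 hc.1) hb
  case PO.DR.EQ => exact absurd (m2 ha.1 hc.1) hb
  case PO.PP.DR => exact absurd (m1 ha.1 hb.1) hc
  case PO.PP.PPi => exact absurd (t5 hb.1 hc.1) ha.2.2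
  case PO.PP.EQ => exact absurd (t5 hb.1 hc.2) ha.2.2
  case PO.PPi.PP => exact absurd (t3 hc.1 hb.1) ha.2.1
  case PO.PPi.EQ => exact absurd (t3 hc.1 hb.1) ha.2.1
  case PO.EQ.DR => exact absurd (m1 ha.1 hb.1) hc
  case PO.EQ.PP => exact absurd (t3 hc.1 hb.2) ha.2.1
  case PO.EQ.PPi => exact absurd (t5 hb.1 hc.1) ha.2.2
  case PO.EQ.EQ => exact absurd (t3 hc.1 hb.2) ha.2.1
  case PP.DR.PO => exact absurd (m4 hc.1 ha.1) hb
  case PP.DR.PP => exact absurd (m2 (o1 ha.1) hc.1) hb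
  case PP.DR.PPi => exact absurd (o4 (t4 hc.1 ha.1)) hb
  case PP.DR.EQ => exact absurd (o4 (t4 hc.2 ha.1)) hb
  case PP.PO.PPi => exact absurd (t4 hc.1 ha.1) hb.2.2
  case PP.PO.EQ => exact absurd (t4 hc.2 ha.1) hb.2.2
  case PP.PP.DR => exact absurd (o5 (t1 ha.1 hb.1)) hc
  case PP.PP.PO => exact absurd (t1 ha.1 hb.1) hc.2.1
  case PP.PP.PPi => exact absurd (t1 ha.1 hb.1) hc.2
  case PP.PP.EQ => exact absurd (t4 hc.2 ha.1) hb.2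
  case PP.EQ.DR => exact absurd (o5 (t1 ha.1 hb.1)) hc
  case PP.EQ.PO => exact absurd (t1 ha.1 hb.1) hc.2.1
  case PP.EQ.PPi => exact absurd (t1 ha.1 hb.1) hc.2
  case PP.EQ.EQ => exact absurd (t5 hb.1 hc.2) ha.2
  case PPi.DR.PP => exact absurd (o3 (t2 ha.1 hc.1)) hb
  case PPi.DR.EQ => exact absurd (o3 (t2 ha.1 hc.1)) hb
  case PPi.PO.DR => exact absurd (m6 hb.1 ha.1) hc
  case PPi.PO.PP => exact absurd (t2 ha.1 hc.1) hb.2.1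
  case PPi.PO.EQ => exact absurd (t2 ha.1 hc.1) hb.2.1
  case PPi.PP.DR => exact absurd (m1 (o2 ha.1) hb.1) hc
  case PPi.PPi.DR => exact absurd (o6 (t6 hb.1 ha.1)) hc
  case PPi.PPi.PO => exact absurd (t6 hb.1 ha.1) hc.2.2
  case PPi.PPi.PP => exact absurd (t2 ha.1 hc.1) hb.2
  case PPi.PPi.EQ => exact absurd (t2 ha.1 hc.1) hb.2
  case PPi.EQ.DR => exact absurd (o6 (t6 hb.2 ha.1)) hc
  case PPi.EQ.PO => exact absurd (t6 hb.2 ha.1) hc.2.2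
  case PPi.EQ.PP => exact absurd (t3 hc.1 hb.2) ha.2
  case PPi.EQ.EQ => exact absurd (t3 hc.1 hb.2) ha.2
  case EQ.DR.PO => exact absurd (m4 hc.1 ha.1) hb
  case EQ.DR.PP => exact absurd (o3 (t2 ha.2 hc.1)) hb
  case EQ.DR.PPi => exact absurd (o4 (t4 hc.1 ha.1)) hb
  case EQ.DR.EQ => exact absurd (o3 (t2 ha.2 hc.1)) hb
  case EQ.PO.DR => exact absurd (m6 hb.1 ha.2) hc
  case EQ.PO.PP => exact absurd (t2 ha.2 hc.1) hb.2.1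
  case EQ.PO.PPi => exact absurd (t4 hc.1 ha.1) hb.2.2
  case EQ.PO.EQ => exact absurd (t2 ha.2 hc.1) hb.2.1
  case EQ.PP.DR => exact absurd (o5 (t1 ha.1 hb.1)) hc
  case EQ.PP.PO => exact absurd (t1 ha.1 hb.1) hc.2.1
  case EQ.PP.PPi => exact absurd (t1 ha.1 hb.1) hc.2
  case EQ.PP.EQ => exact absurd (t4 hc.2 ha.1) hb.2
  case EQ.PPi.DR => exact absurd (o6 (t6 hb.1 ha.2)) hc
  case EQ.PPi.PO => exact absurd (t6 hb.1 ha.2) hc.2.2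
  case EQ.PPi.PP => exact absurd (t2 ha.2 hc.1) hb.2
  case EQ.PPi.EQ => exact absurd (t2 ha.2 hc.1) hb.2
  case EQ.EQ.DR => exact absurd (o5 (t1 ha.1 hb.1)) hc
  case EQ.EQ.PO => exact absurd (t1 ha.1 hb.1) hc.2.1
  case EQ.EQ.PP => exact absurd (t6 hb.2 ha.2) hc.2
  case EQ.EQ.PPi => exact absurd (t1 ha.1 hb.1) hc.2
/-! #### The square model -/

section SqModel
open Set

def sq (k : ℕ) : Set (ℝ × ℝ) := Icc (2*k : ℝ) (2*k+1) ×ˢ Icc (0:ℝ) 1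

lemma close_eq {k l : ℕ} {q r : ℝ × ℝ} (hq : q ∈ sq k) (hr : r ∈ sq l)
    (h : dist q r < 1) : k = l := by
  by_contra hne
  have h1 : dist q.1 r.1 ≤ dist q r := by rw [Prod.dist_eq]; exact le_max_left _ _
  have h2 : (1:ℝ) ≤ dist q.1 r.1 := by
    rw [Real.dist_eq]
    obtain ⟨⟨hq1, hq2⟩, _⟩ := hq
    obtain ⟨⟨hr1, hr2⟩, _⟩ := hr
    rcases Nat.lt_or_ge k l with hkl | hkl
    · have : (k:ℝ) + 1 ≤ l := by exact_mod_cast hkl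
      rw [abs_sub_comm, abs_of_nonneg (by linarith)]
      linarith
    · have hlk : l < k := lt_of_le_of_ne hkl (Ne.symm hne)
      have : (l:ℝ) + 1 ≤ k := by exact_mod_cast hlk
      rw [abs_of_nonneg (by linarith)]
      linarith
  linarith

lemma sq_closed (k : ℕ) : IsClosed (sq k) := isClosed_Icc.prod isClosed_Icc

lemma sq_reg (k : ℕ) : sq k = closure (interior (sq k)) := by
  have hopen : IsOpen (Ioo (2*k : ℝ) (2*k+1) ×ˢ Ioo (0:ℝ) 1) := isOpen_Ioo.prod isOpen_Ioo
  have hsub : Ioo (2*k : ℝ) (2*k+1) ×ˢ Ioo (0:ℝ) 1 ⊆ sq k :=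
    prod_mono Ioo_subset_Icc_self Ioo_subset_Icc_self
  apply Subset.antisymm
  · have : closure (Ioo (2*k : ℝ) (2*k+1) ×ˢ Ioo (0:ℝ) 1) = sq k := by
      rw [closure_prod_eq, closure_Ioo (by norm_num), closure_Ioo (by norm_num)]; rfl
    calc sq k = closure (Ioo (2*k : ℝ) (2*k+1) ×ˢ Ioo (0:ℝ) 1) := this.symm
    _ ⊆ closure (interior (sq k)) := closure_mono (interior_maximal hsub hopen)
  · exact closure_minimal interior_subset (sq_closed k)

def U (S : Set ℕ) : Set (ℝ × ℝ) := ⋃ k ∈ S, sq k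

lemma lf (S : Set ℕ) : LocallyFinite (fun k : S => sq (k:ℕ)) := by
  intro x
  refine ⟨Metric.ball x (1/2), Metric.ball_mem_nhds x (by norm_num), ?_⟩
  apply Set.Subsingleton.finite
  rintro ⟨k, hk⟩ ⟨q, hq, hq'⟩ ⟨l, hl⟩ ⟨r, hr, hr'⟩
  have hd : dist q r < 1 := by
    have h1 := Metric.mem_ball.mp hq'
    have h2 := Metric.mem_ball.mp hr'
    calc dist q r ≤ dist q x + dist x r := dist_triangle _ _ _
    _ < 1 := by rw [dist_comm x r] at *; linarith
  exact Subtype.ext (close_eq hq hr hd)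

lemma U_closed (S : Set ℕ) : IsClosed (U S) := by
  have : U S = ⋃ k : S, sq (k:ℕ) := by rw [iUnion_coe_set]; rfl
  rw [this]
  rw [← closure_eq_iff_isClosed, (lf S).closure_iUnion]
  simp only [(sq_closed _).closure_eq]

lemma U_reg (S : Set ℕ) : U S = closure (interior (U S)) := by
  apply Subset.antisymm
  · intro p hp
    obtain ⟨k, hk, hpk⟩ := mem_iUnion₂.mp hp
    have h1 : sq k ⊆ closure (interior (U S)) := by
      rw [sq_reg k]
      apply closure_mono
      apply interior_mono
      exact subset_iUnion₂_of_subset k hk (Subset.rfl)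
    exact h1 hpk
  · exact closure_minimal interior_subset (U_closed S)

def pt (k : ℕ) : ℝ × ℝ := (2*k, 0)

lemma pt_mem (k : ℕ) : pt k ∈ sq k := by
  refine ⟨⟨le_refl _, ?_⟩, ⟨le_refl _, ?_⟩⟩ <;> norm_num [pt]

lemma pt_mem_iff {k l : ℕ} : pt k ∈ sq l ↔ k = l :=
  ⟨fun h => close_eq (pt_mem k) h (by simp), fun h => h ▸ pt_mem k⟩

lemma mem_U_iff {S : Set ℕ} {k : ℕ} (hp : pt k ∈ U S) : k ∈ S := by
  obtain ⟨l, hl, hpl⟩ := mem_iUnion₂.mp hp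
  rwa [pt_mem_iff.mp hpl]

lemma U_subset_iff {S T : Set ℕ} : U S ⊆ U T ↔ S ⊆ T := by
  constructor
  · intro h k hk
    exact mem_U_iff (h (mem_iUnion₂.mpr ⟨k, hk, pt_mem k⟩))
  · intro h
    exact iUnion₂_mono' fun k hk => ⟨k, h hk, Subset.rfl⟩

lemma U_inter {S T : Set ℕ} : U S ∩ U T = U (S ∩ T) := by
  ext p
  simp only [U, mem_inter_iff, mem_iUnion]
  constructor
  · rintro ⟨⟨k, hk, hpk⟩, ⟨l, hl, hpl⟩⟩
    have : k = l := by
      by_contra hne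
      exact hne (close_eq hpk hpl (by rw [dist_self]; norm_num))
    subst this
    exact ⟨k, ⟨hk, hl⟩, hpk⟩
  · rintro ⟨k, ⟨hk, hl⟩, hpk⟩
    exact ⟨⟨k, hk, hpk⟩, ⟨k, hl, hpk⟩⟩

lemma U_nonempty {S : Set ℕ} (h : S.Nonempty) : (U S).Nonempty := by
  obtain ⟨k, hk⟩ := h
  exact ⟨pt k, mem_iUnion₂.mpr ⟨k, hk, pt_mem k⟩⟩

lemma U_inj {S T : Set ℕ} (h : U S = U T) : S = T :=
  Subset.antisymm (U_subset_iff.mp h.le) (U_subset_iff.mp h.ge)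

end SqModel

/-- The region associated to a (nonempty) finite set of naturals. -/
noncomputable def Reg (A : Finset ℕ) : Region :=
  if h : A.Nonempty then
    ⟨U ↑A, U_nonempty (by exact_mod_cast h.to_set), U_reg _⟩
  else ⟨sq 0, ⟨pt 0, pt_mem 0⟩, sq_reg 0⟩

lemma Reg_val {A : Finset ℕ} (h : A.Nonempty) : (Reg A).1 = U ↑A := by
  rw [Reg]; exact congrArg Subtype.val (dif_pos h)

/-- Set-level interpretation of the basic relations on finite sets. -/
def fsi {γ : Type*} [DecidableEq γ] : RCC5Basic → Finset γ → Finset γ → Prop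
  | RCC5Basic.DR, A, B => A ∩ B = ∅
  | RCC5Basic.PO, A, B => (A ∩ B).Nonempty ∧ ¬ A ⊆ B ∧ ¬ B ⊆ A
  | RCC5Basic.PP, A, B => A ⊆ B ∧ A ≠ B
  | RCC5Basic.PPi, A, B => B ⊆ A ∧ A ≠ B
  | RCC5Basic.EQ, A, B => A = B

instance {γ : Type*} [DecidableEq γ] (b : RCC5Basic) (A B : Finset γ) :
    Decidable (fsi b A B) := by
  cases b <;> simp only [fsi] <;> infer_instance

lemma Reg_sub_iff {A B : Finset ℕ} (hA : A.Nonempty) (hB : B.Nonempty) :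
    (Reg A).1 ⊆ (Reg B).1 ↔ A ⊆ B := by
  rw [Reg_val hA, Reg_val hB, U_subset_iff]
  exact_mod_cast Iff.rfl

lemma Reg_eq_iff {A B : Finset ℕ} (hA : A.Nonempty) (hB : B.Nonempty) :
    Reg A = Reg B ↔ A = B := by
  constructor
  · intro h
    have := congrArg Subtype.val h
    rw [Reg_val hA, Reg_val hB] at this
    exact_mod_cast Finset.coe_injective (U_inj this)
  · rintro rfl; rfl

lemma Reg_O_iff {A B : Finset ℕ} (hA : A.Nonempty) (hB : B.Nonempty) :
    Region.O (Reg A) (Reg B) ↔ (A ∩ B).Nonempty := by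
  constructor
  · rintro ⟨z, h1, h2⟩
    obtain ⟨p, hp⟩ := z.2.1
    rw [Reg_val hA] at h1; rw [Reg_val hB] at h2
    have := U_inter.subset ⟨h1 hp, h2 hp⟩
    obtain ⟨k, hk, -⟩ := Set.mem_iUnion₂.mp this
    obtain ⟨hkA, hkB⟩ := hk
    exact ⟨k, Finset.mem_inter.mpr ⟨by exact_mod_cast hkA, by exact_mod_cast hkB⟩⟩
  · rintro ⟨k, hk⟩
    obtain ⟨hkA, hkB⟩ := Finset.mem_inter.mp hk
    refine ⟨⟨sq k, ⟨pt k, pt_mem k⟩, sq_reg k⟩, ?_, ?_⟩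
    · rw [Reg_val hA]
      exact Set.subset_iUnion₂_of_subset k (by exact_mod_cast hkA) Set.Subset.rfl
    · rw [Reg_val hB]
      exact Set.subset_iUnion₂_of_subset k (by exact_mod_cast hkB) Set.Subset.rfl

/-- A set-level configuration gives a region-level configuration. -/
lemma interp_of_fsi {b : RCC5Basic} {A B : Finset ℕ} (hA : A.Nonempty) (hB : B.Nonempty)
    (h : fsi b A B) : RCC5Basic.interp b (Reg A) (Reg B) := by
  cases b
  · rw [iff_DR, Reg_O_iff hA hB]
    simp only [fsi] at h
    rw [h]
    exact fun hne => (Finset.not_nonempty_empty hne)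
  · obtain ⟨h1, h2, h3⟩ := h
    rw [iff_PO, Reg_O_iff hA hB, Reg_sub_iff hA hB, Reg_sub_iff hB hA]
    exact ⟨h1, h2, h3⟩
  · obtain ⟨h1, h2⟩ := h
    exact ⟨(Reg_sub_iff hA hB).mpr h1, fun hc => h2 ((Reg_eq_iff hA hB).mp hc)⟩
  · obtain ⟨h1, h2⟩ := h
    exact ⟨(Reg_sub_iff hB hA).mpr h1, fun hc => h2 ((Reg_eq_iff hA hB).mp hc)⟩
  · exact (Reg_eq_iff hA hB).mpr h

/-- Every entry of the table is realizable over small finite sets. -/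
lemma tab_realizable_fin : ∀ a b c : RCC5Basic, c ∈ tab a b →
    ∃ A ∈ (Finset.range 4).powerset.filter (Finset.Nonempty),
    ∃ B ∈ (Finset.range 4).powerset.filter (Finset.Nonempty),
    ∃ C ∈ (Finset.range 4).powerset.filter (Finset.Nonempty),
      fsi a A B ∧ fsi b B C ∧ fsi c A C := by decide

/-- Every entry of the table is realizable by regions. -/
lemma realize {a b c : RCC5Basic} (h : c ∈ tab a b) :
    ∃ x y z : Region, RCC5Basic.interp a x y ∧ RCC5Basic.interp b y z ∧
      RCC5Basic.interp c x z := by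
  obtain ⟨A, hAm, B, hBm, C, hCm, h1, h2, h3⟩ := tab_realizable_fin a b c h
  have hA := (Finset.mem_filter.mp hAm).2
  have hB := (Finset.mem_filter.mp hBm).2
  have hC := (Finset.mem_filter.mp hCm).2
  exact ⟨Reg A, Reg B, Reg C, interp_of_fsi hA hB h1, interp_of_fsi hB hC h2,
    interp_of_fsi hA hC h3⟩

/-! #### Bridging `RCC5Rel.comp` with the finite table -/

lemma comp_singleton (a b : RCC5Basic) :
    RCC5Rel.comp {a} {b} = ↑(tab a b) := by
  ext c
  constructor
  · rintro ⟨x, z, hc, y, ⟨a', ha', hax⟩, ⟨b', hb', hbx⟩⟩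
    rw [Set.mem_singleton_iff] at ha' hb'
    subst ha'; subst hb'
    exact complete hax hbx hc
  · intro hc
    obtain ⟨x, y, z, h1, h2, h3⟩ := realize (Finset.mem_coe.mp hc)
    exact ⟨x, z, h3, y, ⟨a, rfl, h1⟩, ⟨b, rfl, h2⟩⟩

lemma mem_comp {R S : RCC5Rel} {c : RCC5Basic} :
    c ∈ RCC5Rel.comp R S ↔ ∃ a ∈ R, ∃ b ∈ S, c ∈ tab a b := by
  constructor
  · rintro ⟨x, z, hc, y, ⟨a, ha, hax⟩, ⟨b, hb, hbx⟩⟩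
    exact ⟨a, ha, b, hb, complete hax hbx hc⟩
  · rintro ⟨a, ha, b, hb, hc⟩
    obtain ⟨x, y, z, h1, h2, h3⟩ := realize hc
    exact ⟨x, z, h3, y, ⟨a, ha, h1⟩, ⟨b, hb, h2⟩⟩

/-! #### Finite composition algebra -/

/-- Finite weak composition. -/
def fcmp (F G : Finset RCC5Basic) : Finset RCC5Basic :=
  F.biUnion fun a => G.biUnion fun b => tab a b

lemma mem_fcmp {F G : Finset RCC5Basic} {c : RCC5Basic} :
    c ∈ fcmp F G ↔ ∃ a ∈ F, ∃ b ∈ G, c ∈ tab a b := by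
  simp [fcmp]

lemma coe_fcmp (F G : Finset RCC5Basic) :
    RCC5Rel.comp ↑F ↑G = ↑(fcmp F G) := by
  ext c
  rw [Finset.mem_coe, mem_fcmp, mem_comp]
  simp

/-- Finite converse. -/
def fconv (F : Finset RCC5Basic) : Finset RCC5Basic := F.image RCC5Basic.conv

lemma conv_conv (b : RCC5Basic) : RCC5Basic.conv (RCC5Basic.conv b) = b := by
  cases b <;> rfl

lemma mem_fconv {F : Finset RCC5Basic} {b : RCC5Basic} :
    b ∈ fconv F ↔ RCC5Basic.conv b ∈ F := by
  simp only [fconv, Finset.mem_image]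
  constructor
  · rintro ⟨a, ha, rfl⟩; rwa [conv_conv]
  · intro h; exact ⟨_, h, conv_conv b⟩

lemma coe_fconv (F : Finset RCC5Basic) :
    RCC5Rel.conv ↑F = ↑(fconv F) := by
  ext b
  rw [Finset.mem_coe, mem_fconv]
  rfl

lemma fconv_singleton (a : RCC5Basic) : fconv {a} = {RCC5Basic.conv a} := by
  simp [fconv]

lemma fconv_inter (F G : Finset RCC5Basic) :
    fconv (F ∩ G) = fconv F ∩ fconv G := by
  ext b; simp [mem_fconv, Finset.mem_inter]

/- Decidable facts about the table. -/
lemma tab_nonempty : ∀ a b : RCC5Basic, (tab a b).Nonempty := by decide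

lemma rot1 : ∀ a b c : RCC5Basic, c ∈ tab a b → b ∈ tab (RCC5Basic.conv a) c := by decide

lemma rot2 : ∀ a b c : RCC5Basic, c ∈ tab a b → a ∈ tab c (RCC5Basic.conv b) := by decide

lemma rotc : ∀ a b c : RCC5Basic, c ∈ tab a b →
    RCC5Basic.conv c ∈ tab (RCC5Basic.conv b) (RCC5Basic.conv a) := by decide

lemma rotd : ∀ a b c : RCC5Basic, c ∈ tab a b →
    RCC5Basic.conv b ∈ tab (RCC5Basic.conv c) a := by decide

lemma tab_EQ_left : ∀ b : RCC5Basic, tab RCC5Basic.EQ b = {b} := fun b => rfl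

lemma tab_EQ_right : ∀ a : RCC5Basic, tab a RCC5Basic.EQ = {a} := by decide

lemma EQ_mem_tab : ∀ a b : RCC5Basic, RCC5Basic.EQ ∈ tab a b → b = RCC5Basic.conv a := by
  decide

lemma EQ_mem_tab_conv : ∀ a : RCC5Basic, RCC5Basic.EQ ∈ tab a (RCC5Basic.conv a) := by decide

lemma mem_tab_conv_self : ∀ a : RCC5Basic,
    a ∈ fcmp {a} (fcmp {RCC5Basic.conv a} {a}) := by decide

lemma assoc5 : ∀ a b c : RCC5Basic,
    (tab a b).biUnion (fun u => tab u c) = (tab b c).biUnion (fun v => tab a v) := by decide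

lemma fcmp_assoc (F G H : Finset RCC5Basic) :
    fcmp (fcmp F G) H = fcmp F (fcmp G H) := by
  ext c
  simp only [mem_fcmp]
  constructor
  · rintro ⟨u, ⟨a, ha, b, hb, hu⟩, d, hd, hc⟩
    have : c ∈ (tab a b).biUnion (fun u => tab u d) := Finset.mem_biUnion.mpr ⟨u, hu, hc⟩
    rw [assoc5] at this
    obtain ⟨v, hv, hc'⟩ := Finset.mem_biUnion.mp this
    exact ⟨a, ha, v, ⟨b, hb, d, hd, hv⟩, hc'⟩
  · rintro ⟨a, ha, v, ⟨b, hb, d, hd, hv⟩, hc⟩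
    have : c ∈ (tab b d).biUnion (fun v => tab a v) := Finset.mem_biUnion.mpr ⟨v, hv, hc⟩
    rw [← assoc5] at this
    obtain ⟨u, hu, hc'⟩ := Finset.mem_biUnion.mp this
    exact ⟨u, ⟨a, ha, b, hb, hu⟩, d, hd, hc'⟩

lemma fcmp_mono {F F' G G' : Finset RCC5Basic} (h1 : F ⊆ F') (h2 : G ⊆ G') :
    fcmp F G ⊆ fcmp F' G' := by
  intro c hc
  obtain ⟨a, ha, b, hb, hc'⟩ := mem_fcmp.mp hc
  exact mem_fcmp.mpr ⟨a, h1 ha, b, h2 hb, hc'⟩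

lemma fcmp_singleton (a b : RCC5Basic) : fcmp {a} {b} = tab a b := by
  simp [fcmp]

lemma fcmp_EQ_left (G : Finset RCC5Basic) : fcmp {RCC5Basic.EQ} G = G := by
  ext c
  simp only [mem_fcmp, Finset.mem_singleton]
  constructor
  · rintro ⟨a, rfl, b, hb, hc⟩
    rw [tab_EQ_left, Finset.mem_singleton] at hc
    exact hc ▸ hb
  · intro hc
    exact ⟨_, rfl, c, hc, by rw [tab_EQ_left]; exact Finset.mem_singleton_self c⟩

lemma fcmp_EQ_right (F : Finset RCC5Basic) : fcmp F {RCC5Basic.EQ} = F := by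
  ext c
  simp only [mem_fcmp, Finset.mem_singleton]
  constructor
  · rintro ⟨a, ha, b, rfl, hc⟩
    rw [tab_EQ_right, Finset.mem_singleton] at hc
    exact hc ▸ ha
  · intro hc
    exact ⟨c, hc, _, rfl, by rw [tab_EQ_right]; exact Finset.mem_singleton_self c⟩

lemma fcmp_nonempty {F G : Finset RCC5Basic} (hF : F.Nonempty) (hG : G.Nonempty) :
    (fcmp F G).Nonempty := by
  obtain ⟨a, ha⟩ := hF
  obtain ⟨b, hb⟩ := hG
  obtain ⟨c, hc⟩ := tab_nonempty a b
  exact ⟨c, mem_fcmp.mpr ⟨a, ha, b, hb, hc⟩⟩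

lemma fconv_fcmp (F G : Finset RCC5Basic) :
    fconv (fcmp F G) = fcmp (fconv G) (fconv F) := by
  ext c
  simp only [mem_fconv, mem_fcmp]
  constructor
  · rintro ⟨a, ha, b, hb, hc⟩
    have h2 := rotc a b _ hc
    rw [conv_conv] at h2
    exact ⟨RCC5Basic.conv b, by rw [conv_conv]; exact hb,
      RCC5Basic.conv a, by rw [conv_conv]; exact ha, h2⟩
  · rintro ⟨b', hb', a', ha', hc⟩
    exact ⟨_, ha', _, hb', rotc b' a' c hc⟩

/-! #### Refinement of path-consistent networks over a distributive subalgebra -/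

section Refinement

variable {𝒮 : Set RCC5Rel}

lemma SS_singleton (h𝒮 : IsDistributiveSubalgebra 𝒮) (b : RCC5Basic) :
    ↑({b} : Finset RCC5Basic) ∈ 𝒮 := by
  rw [Finset.coe_singleton]; exact h𝒮.1 b

lemma SS_fcmp (h𝒮 : IsDistributiveSubalgebra 𝒮) {F G : Finset RCC5Basic}
    (hF : ↑F ∈ 𝒮) (hG : ↑G ∈ 𝒮) : ↑(fcmp F G) ∈ 𝒮 := by
  rw [← coe_fcmp]; exact h𝒮.2.2.1 _ hF _ hG

lemma SS_inter (h𝒮 : IsDistributiveSubalgebra 𝒮) {F G : Finset RCC5Basic}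
    (hF : ↑F ∈ 𝒮) (hG : ↑G ∈ 𝒮) (hne : (F ∩ G).Nonempty) : ↑(F ∩ G) ∈ 𝒮 := by
  rw [Finset.coe_inter]
  exact h𝒮.2.2.2.1 _ hF _ hG
    (by rw [← Finset.coe_inter]; exact Finset.coe_nonempty.mpr hne)

lemma distL (h𝒮 : IsDistributiveSubalgebra 𝒮) {R T₁ T₂ : Finset RCC5Basic}
    (hR : ↑R ∈ 𝒮) (hT1 : ↑T₁ ∈ 𝒮) (hT2 : ↑T₂ ∈ 𝒮) (hne : (T₁ ∩ T₂).Nonempty) :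
    fcmp R (T₁ ∩ T₂) = fcmp R T₁ ∩ fcmp R T₂ := by
  have hne' : ((↑T₁ : RCC5Rel) ∩ ↑T₂).Nonempty := by
    rw [← Finset.coe_inter]; exact Finset.coe_nonempty.mpr hne
  have := (h𝒮.2.2.2.2 (↑R) hR (↑T₁) hT1 (↑T₂) hT2 hne').1
  apply Finset.coe_injective
  rw [Finset.coe_inter, ← coe_fcmp, ← coe_fcmp, ← coe_fcmp, Finset.coe_inter]
  exact this

lemma distR (h𝒮 : IsDistributiveSubalgebra 𝒮) {R T₁ T₂ : Finset RCC5Basic}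
    (hR : ↑R ∈ 𝒮) (hT1 : ↑T₁ ∈ 𝒮) (hT2 : ↑T₂ ∈ 𝒮) (hne : (T₁ ∩ T₂).Nonempty) :
    fcmp (T₁ ∩ T₂) R = fcmp T₁ R ∩ fcmp T₂ R := by
  have hne' : ((↑T₁ : RCC5Rel) ∩ ↑T₂).Nonempty := by
    rw [← Finset.coe_inter]; exact Finset.coe_nonempty.mpr hne
  have := (h𝒮.2.2.2.2 (↑R) hR (↑T₁) hT1 (↑T₂) hT2 hne').2
  apply Finset.coe_injective
  rw [Finset.coe_inter, ← coe_fcmp, ← coe_fcmp, ← coe_fcmp, Finset.coe_inter]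
  exact this

/-- A good finite network over `𝒮`. -/
structure GN {n : ℕ} (𝒮 : Set RCC5Rel) (N : Fin n → Fin n → Finset RCC5Basic) : Prop where
  ne : ∀ i j, (N i j).Nonempty
  diag : ∀ i, N i i = {RCC5Basic.EQ}
  cv : ∀ i j, N j i = fconv (N i j)
  pc : ∀ i j k, N i j ⊆ fcmp (N i k) (N k j)
  ovr : ∀ i j, ↑(N i j) ∈ 𝒮

lemma step {n : ℕ} (h𝒮 : IsDistributiveSubalgebra 𝒮)
    {N : Fin n → Fin n → Finset RCC5Basic} (hN : GN 𝒮 N)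
    {p q : Fin n} {α : RCC5Basic} (hα : α ∈ N p q) :
    ∃ N' : Fin n → Fin n → Finset RCC5Basic,
      GN 𝒮 N' ∧ (∀ k l, N' k l ⊆ N k l) ∧ N' p q = {α} := by
  classical
  set cα := RCC5Basic.conv α with hcαdef
  have hcα : cα ∈ N q p := by
    rw [hN.cv p q, mem_fconv, hcαdef, conv_conv]; exact hα
  have hαs : ({α} : Finset RCC5Basic) ⊆ N p q := Finset.singleton_subset_iff.mpr hα
  have hcαs : ({cα} : Finset RCC5Basic) ⊆ N q p := Finset.singleton_subset_iff.mpr hcα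
  set X : Fin n → Fin n → Finset RCC5Basic :=
    fun k l => fcmp (N k p) (fcmp {α} (N q l)) with hXdef
  set Y : Fin n → Fin n → Finset RCC5Basic :=
    fun k l => fcmp (N k q) (fcmp {cα} (N p l)) with hYdef
  set N' : Fin n → Fin n → Finset RCC5Basic :=
    fun k l => N k l ∩ X k l ∩ Y k l with hN'def
  have hSX : ∀ k l, ↑(X k l) ∈ 𝒮 := fun k l =>
    SS_fcmp h𝒮 (hN.ovr k p) (SS_fcmp h𝒮 (SS_singleton h𝒮 α) (hN.ovr q l))
  have hSY : ∀ k l, ↑(Y k l) ∈ 𝒮 := fun k l =>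
    SS_fcmp h𝒮 (hN.ovr k q) (SS_fcmp h𝒮 (SS_singleton h𝒮 cα) (hN.ovr p l))
  -- G-nonemptiness
  have L0 : ∀ k, ∃ e, e ∈ N k q ∧ e ∈ fcmp (N k p) {α} := by
    intro k
    obtain ⟨a, ha, e, he, hα'⟩ := mem_fcmp.mp (hN.pc p q k hα)
    refine ⟨e, he, mem_fcmp.mpr ⟨RCC5Basic.conv a, ?_, α, Finset.mem_singleton_self α,
      rot1 a e α hα'⟩⟩
    rw [hN.cv p k, mem_fconv, conv_conv]; exact ha
  -- H'-nonemptiness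
  have L0' : ∀ l, ∃ f, f ∈ N q l ∧ f ∈ fcmp {cα} (N p l) := by
    intro l
    obtain ⟨d, hd, f, hf, hα'⟩ := mem_fcmp.mp (hN.pc p q l hα)
    refine ⟨RCC5Basic.conv f, ?_, mem_fcmp.mpr ⟨cα, Finset.mem_singleton_self cα,
      d, hd, rotd d f α hα'⟩⟩
    rw [hN.cv l q, mem_fconv, conv_conv]; exact hf
  -- Nonemptiness of the refined constraints
  have L1 : ∀ k l, ∃ β, β ∈ N k l ∧ β ∈ X k l ∧ β ∈ Y k l := by
    intro k l
    -- the set T₁ ∩ T₂ = N l q ∩ (N l p ⋄ α) is nonempty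
    have hT2S : ↑(fcmp (N l p) {α}) ∈ 𝒮 :=
      SS_fcmp h𝒮 (hN.ovr l p) (SS_singleton h𝒮 α)
    have hT12ne : (N l q ∩ fcmp (N l p) {α}).Nonempty := by
      obtain ⟨f, hf1, hf2⟩ := L0' l
      obtain ⟨c0, hc0, d0, hd0, hfd⟩ := mem_fcmp.mp hf2
      rw [Finset.mem_singleton] at hc0
      rw [hc0] at hfd
      refine ⟨RCC5Basic.conv f, Finset.mem_inter.mpr ⟨?_, ?_⟩⟩
      · rw [hN.cv q l, mem_fconv, conv_conv]; exact hf1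
      · refine mem_fcmp.mpr ⟨RCC5Basic.conv d0, ?_, α, Finset.mem_singleton_self α, ?_⟩
        · rw [hN.cv p l, mem_fconv, conv_conv]; exact hd0
        · have := rotc cα d0 f hfd
          rwa [hcαdef, conv_conv] at this
    -- G ⊆ N k l ⋄ (N l q ∩ (N l p ⋄ α))
    have hGsub : N k q ∩ fcmp (N k p) {α} ⊆
        fcmp (N k l) (N l q ∩ fcmp (N l p) {α}) := by
      rw [distL h𝒮 (hN.ovr k l) (hN.ovr l q) hT2S hT12ne]
      refine Finset.subset_inter ?_ ?_
      · exact Finset.inter_subset_left.trans (hN.pc k q l)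
      · refine Finset.inter_subset_right.trans ?_
        calc fcmp (N k p) {α} ⊆ fcmp (fcmp (N k l) (N l p)) {α} :=
              fcmp_mono (hN.pc k p l) (Finset.Subset.refl _)
          _ = fcmp (N k l) (fcmp (N l p) {α}) := fcmp_assoc _ _ _
    obtain ⟨e, he1, he2⟩ := L0 k
    obtain ⟨β, hβ, h', hh', hetab⟩ :=
      mem_fcmp.mp (hGsub (Finset.mem_inter.mpr ⟨he1, he2⟩))
    obtain ⟨hh'1, hh'2⟩ := Finset.mem_inter.mp hh'
    have hβe : β ∈ tab e (RCC5Basic.conv h') := rot2 β h' e hetab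
    refine ⟨β, hβ, ?_, ?_⟩
    · -- β ∈ X k l
      obtain ⟨a, ha, c0, hc0, he3⟩ := mem_fcmp.mp he2
      rw [Finset.mem_singleton] at hc0
      rw [hc0] at he3
      have : β ∈ (tab a α).biUnion (fun u => tab u (RCC5Basic.conv h')) :=
        Finset.mem_biUnion.mpr ⟨e, he3, hβe⟩
      rw [assoc5] at this
      obtain ⟨v, hv, hβ'⟩ := Finset.mem_biUnion.mp this
      refine mem_fcmp.mpr ⟨a, ha, v, ?_, hβ'⟩
      refine mem_fcmp.mpr ⟨α, Finset.mem_singleton_self α, RCC5Basic.conv h', ?_, hv⟩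
      rw [hN.cv l q, mem_fconv, conv_conv]; exact hh'1
    · -- β ∈ Y k l
      obtain ⟨d', hd', c0, hc0, he4⟩ := mem_fcmp.mp hh'2
      rw [Finset.mem_singleton] at hc0
      rw [hc0] at he4
      refine mem_fcmp.mpr ⟨e, he1, RCC5Basic.conv h', ?_, hβe⟩
      refine mem_fcmp.mpr ⟨cα, Finset.mem_singleton_self cα, RCC5Basic.conv d', ?_, ?_⟩
      · rw [hN.cv l p, mem_fconv, conv_conv]; exact hd'
      · exact rotc d' α h' he4
  have hne' : ∀ k l, (N' k l).Nonempty := by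
    intro k l
    obtain ⟨β, h1, h2, h3⟩ := L1 k l
    exact ⟨β, Finset.mem_inter.mpr ⟨Finset.mem_inter.mpr ⟨h1, h2⟩, h3⟩⟩
  have hsub : ∀ k l, N' k l ⊆ N k l :=
    fun k l => Finset.inter_subset_left.trans Finset.inter_subset_left
  have hsubX : ∀ k l, N' k l ⊆ X k l :=
    fun k l => Finset.inter_subset_left.trans Finset.inter_subset_right
  have hsubY : ∀ k l, N' k l ⊆ Y k l := fun k l => Finset.inter_subset_right
  have hNXne : ∀ k l, (N k l ∩ X k l).Nonempty :=
    fun k l => (hne' k l).mono Finset.inter_subset_left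
  have hSNX : ∀ k l, ↑(N k l ∩ X k l) ∈ 𝒮 :=
    fun k l => SS_inter h𝒮 (hN.ovr k l) (hSX k l) (hNXne k l)
  have hSN' : ∀ k l, ↑(N' k l) ∈ 𝒮 :=
    fun k l => SS_inter h𝒮 (hSNX k l) (hSY k l) (hne' k l)
  -- the nine inclusion lemmas
  have hEQα : ({RCC5Basic.EQ} : Finset RCC5Basic) ⊆ fcmp {α} {cα} := by
    rw [fcmp_singleton]
    exact Finset.singleton_subset_iff.mpr (EQ_mem_tab_conv α)
  have hccα : RCC5Basic.conv cα = α := by rw [hcαdef, conv_conv]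
  have hEQcα : ({RCC5Basic.EQ} : Finset RCC5Basic) ⊆ fcmp {cα} {α} := by
    rw [fcmp_singleton]
    have h2 := EQ_mem_tab_conv cα
    rw [hccα] at h2
    exact Finset.singleton_subset_iff.mpr h2
  have hkeyα : ({α} : Finset RCC5Basic) ⊆ fcmp {α} (fcmp {cα} {α}) :=
    Finset.singleton_subset_iff.mpr (mem_tab_conv_self α)
  have hkeycα : ({cα} : Finset RCC5Basic) ⊆ fcmp {cα} (fcmp {α} {cα}) := by
    have h2 := mem_tab_conv_self cα
    rw [hccα] at h2
    exact Finset.singleton_subset_iff.mpr h2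
  have incl2 : ∀ k m l, X k l ⊆ fcmp (N k m) (X m l) := by
    intro k m l
    calc X k l ⊆ fcmp (fcmp (N k m) (N m p)) (fcmp {α} (N q l)) :=
          fcmp_mono (hN.pc k p m) (Finset.Subset.refl _)
      _ = fcmp (N k m) (X m l) := fcmp_assoc _ _ _
  have incl3 : ∀ k m l, Y k l ⊆ fcmp (N k m) (Y m l) := by
    intro k m l
    calc Y k l ⊆ fcmp (fcmp (N k m) (N m q)) (fcmp {cα} (N p l)) :=
          fcmp_mono (hN.pc k q m) (Finset.Subset.refl _)
      _ = fcmp (N k m) (Y m l) := fcmp_assoc _ _ _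
  have incl4 : ∀ k m l, X k l ⊆ fcmp (X k m) (N m l) := by
    intro k m l
    calc X k l ⊆ fcmp (N k p) (fcmp {α} (fcmp (N q m) (N m l))) :=
          fcmp_mono (Finset.Subset.refl _)
            (fcmp_mono (Finset.Subset.refl _) (hN.pc q l m))
      _ = fcmp (N k p) (fcmp (fcmp {α} (N q m)) (N m l)) := by
          rw [fcmp_assoc]
      _ = fcmp (X k m) (N m l) := (fcmp_assoc _ _ _).symm
  have incl5 : ∀ k m l, Y k l ⊆ fcmp (Y k m) (N m l) := by
    intro k m l
    calc Y k l ⊆ fcmp (N k q) (fcmp {cα} (fcmp (N p m) (N m l))) :=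
          fcmp_mono (Finset.Subset.refl _)
            (fcmp_mono (Finset.Subset.refl _) (hN.pc p l m))
      _ = fcmp (N k q) (fcmp (fcmp {cα} (N p m)) (N m l)) := by
          rw [fcmp_assoc]
      _ = fcmp (Y k m) (N m l) := (fcmp_assoc _ _ _).symm
  have incl6 : ∀ k m l, X k l ⊆ fcmp (X k m) (X m l) := by
    intro k m l
    have hqp : fcmp {cα} (fcmp {α} (N q l)) ⊆
        fcmp (N q m) (fcmp (N m p) (fcmp {α} (N q l))) := by
      calc fcmp {cα} (fcmp {α} (N q l))
          ⊆ fcmp (fcmp (N q m) (N m p)) (fcmp {α} (N q l)) :=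
            fcmp_mono (hcαs.trans (hN.pc q p m)) (Finset.Subset.refl _)
        _ = fcmp (N q m) (fcmp (N m p) (fcmp {α} (N q l))) := fcmp_assoc _ _ _
    calc X k l ⊆ fcmp (N k p) (fcmp (fcmp {α} (fcmp {cα} {α})) (N q l)) :=
          fcmp_mono (Finset.Subset.refl _) (fcmp_mono hkeyα (Finset.Subset.refl _))
      _ = fcmp (N k p) (fcmp {α} (fcmp {cα} (fcmp {α} (N q l)))) := by
          rw [fcmp_assoc {α} (fcmp {cα} {α}) (N q l), fcmp_assoc {cα} {α} (N q l)]
      _ ⊆ fcmp (N k p) (fcmp {α} (fcmp (N q m) (fcmp (N m p) (fcmp {α} (N q l))))) :=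
          fcmp_mono (Finset.Subset.refl _) (fcmp_mono (Finset.Subset.refl _) hqp)
      _ = fcmp (X k m) (X m l) := by
          rw [← fcmp_assoc {α} (N q m) (fcmp (N m p) (fcmp {α} (N q l))),
            ← fcmp_assoc (N k p) (fcmp {α} (N q m)) (fcmp (N m p) (fcmp {α} (N q l)))]
  have incl9 : ∀ k m l, Y k l ⊆ fcmp (Y k m) (Y m l) := by
    intro k m l
    have hpq : fcmp {α} (fcmp {cα} (N p l)) ⊆
        fcmp (N p m) (fcmp (N m q) (fcmp {cα} (N p l))) := by
      calc fcmp {α} (fcmp {cα} (N p l))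
          ⊆ fcmp (fcmp (N p m) (N m q)) (fcmp {cα} (N p l)) :=
            fcmp_mono (hαs.trans (hN.pc p q m)) (Finset.Subset.refl _)
        _ = fcmp (N p m) (fcmp (N m q) (fcmp {cα} (N p l))) := fcmp_assoc _ _ _
    calc Y k l ⊆ fcmp (N k q) (fcmp (fcmp {cα} (fcmp {α} {cα})) (N p l)) :=
          fcmp_mono (Finset.Subset.refl _) (fcmp_mono hkeycα (Finset.Subset.refl _))
      _ = fcmp (N k q) (fcmp {cα} (fcmp {α} (fcmp {cα} (N p l)))) := by
          rw [fcmp_assoc {cα} (fcmp {α} {cα}) (N p l), fcmp_assoc {α} {cα} (N p l)]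
      _ ⊆ fcmp (N k q) (fcmp {cα} (fcmp (N p m) (fcmp (N m q) (fcmp {cα} (N p l))))) :=
          fcmp_mono (Finset.Subset.refl _) (fcmp_mono (Finset.Subset.refl _) hpq)
      _ = fcmp (Y k m) (Y m l) := by
          rw [← fcmp_assoc {cα} (N p m) (fcmp (N m q) (fcmp {cα} (N p l))),
            ← fcmp_assoc (N k q) (fcmp {cα} (N p m)) (fcmp (N m q) (fcmp {cα} (N p l)))]
  have incl7 : ∀ k m l, N k l ⊆ fcmp (X k m) (Y m l) := by
    intro k m l
    have inner : fcmp {cα} (N p l) ⊆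
        fcmp (N q m) (fcmp (N m q) (fcmp {cα} (N p l))) := by
      calc fcmp {cα} (N p l) = fcmp {RCC5Basic.EQ} (fcmp {cα} (N p l)) :=
            (fcmp_EQ_left _).symm
        _ ⊆ fcmp (fcmp (N q m) (N m q)) (fcmp {cα} (N p l)) := by
            refine fcmp_mono ?_ (Finset.Subset.refl _)
            rw [← hN.diag q]; exact hN.pc q q m
        _ = fcmp (N q m) (fcmp (N m q) (fcmp {cα} (N p l))) := fcmp_assoc _ _ _
    calc N k l ⊆ fcmp (N k p) (N p l) := hN.pc k l p
      _ = fcmp (N k p) (fcmp {RCC5Basic.EQ} (N p l)) := by rw [fcmp_EQ_left]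
      _ ⊆ fcmp (N k p) (fcmp (fcmp {α} {cα}) (N p l)) :=
          fcmp_mono (Finset.Subset.refl _) (fcmp_mono hEQα (Finset.Subset.refl _))
      _ = fcmp (N k p) (fcmp {α} (fcmp {cα} (N p l))) := by
          rw [fcmp_assoc {α} {cα} (N p l)]
      _ ⊆ fcmp (N k p) (fcmp {α} (fcmp (N q m) (fcmp (N m q) (fcmp {cα} (N p l))))) :=
          fcmp_mono (Finset.Subset.refl _) (fcmp_mono (Finset.Subset.refl _) inner)
      _ = fcmp (X k m) (Y m l) := by
          rw [← fcmp_assoc {α} (N q m) (fcmp (N m q) (fcmp {cα} (N p l))),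
            ← fcmp_assoc (N k p) (fcmp {α} (N q m)) (fcmp (N m q) (fcmp {cα} (N p l)))]
  have incl8 : ∀ k m l, N k l ⊆ fcmp (Y k m) (X m l) := by
    intro k m l
    have inner : fcmp {α} (N q l) ⊆
        fcmp (N p m) (fcmp (N m p) (fcmp {α} (N q l))) := by
      calc fcmp {α} (N q l) = fcmp {RCC5Basic.EQ} (fcmp {α} (N q l)) :=
            (fcmp_EQ_left _).symm
        _ ⊆ fcmp (fcmp (N p m) (N m p)) (fcmp {α} (N q l)) := by
            refine fcmp_mono ?_ (Finset.Subset.refl _)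
            rw [← hN.diag p]; exact hN.pc p p m
        _ = fcmp (N p m) (fcmp (N m p) (fcmp {α} (N q l))) := fcmp_assoc _ _ _
    calc N k l ⊆ fcmp (N k q) (N q l) := hN.pc k l q
      _ = fcmp (N k q) (fcmp {RCC5Basic.EQ} (N q l)) := by rw [fcmp_EQ_left]
      _ ⊆ fcmp (N k q) (fcmp (fcmp {cα} {α}) (N q l)) :=
          fcmp_mono (Finset.Subset.refl _) (fcmp_mono hEQcα (Finset.Subset.refl _))
      _ = fcmp (N k q) (fcmp {cα} (fcmp {α} (N q l))) := by
          rw [fcmp_assoc {cα} {α} (N q l)]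
      _ ⊆ fcmp (N k q) (fcmp {cα} (fcmp (N p m) (fcmp (N m p) (fcmp {α} (N q l))))) :=
          fcmp_mono (Finset.Subset.refl _) (fcmp_mono (Finset.Subset.refl _) inner)
      _ = fcmp (Y k m) (X m l) := by
          rw [← fcmp_assoc {cα} (N p m) (fcmp (N m p) (fcmp {α} (N q l))),
            ← fcmp_assoc (N k q) (fcmp {cα} (N p m)) (fcmp (N m p) (fcmp {α} (N q l)))]
  -- path consistency of N'
  have hpc' : ∀ k m l, N' k l ⊆ fcmp (N' k m) (N' m l) := by
    intro k m l
    have E1 : fcmp (N' k m) (N' m l) =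
        fcmp (N k m) (N' m l) ∩ fcmp (X k m) (N' m l) ∩ fcmp (Y k m) (N' m l) := by
      rw [show N' k m = (N k m ∩ X k m) ∩ Y k m from rfl,
        distR h𝒮 (hSN' m l) (hSNX k m) (hSY k m) (hne' k m),
        distR h𝒮 (hSN' m l) (hN.ovr k m) (hSX k m) (hNXne k m)]
    have E2 : ∀ (L : Finset RCC5Basic), ↑L ∈ 𝒮 → fcmp L (N' m l) =
        fcmp L (N m l) ∩ fcmp L (X m l) ∩ fcmp L (Y m l) := by
      intro L hL
      rw [show N' m l = (N m l ∩ X m l) ∩ Y m l from rfl,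
        distL h𝒮 hL (hSNX m l) (hSY m l) (hne' m l),
        distL h𝒮 hL (hN.ovr m l) (hSX m l) (hNXne m l)]
    rw [E1, E2 _ (hN.ovr k m), E2 _ (hSX k m), E2 _ (hSY k m)]
    refine Finset.subset_inter (Finset.subset_inter ?_ ?_) ?_
    · exact Finset.subset_inter (Finset.subset_inter
        ((hsub k l).trans (hN.pc k l m))
        ((hsubX k l).trans (incl2 k m l)))
        ((hsubY k l).trans (incl3 k m l))
    · exact Finset.subset_inter (Finset.subset_inter
        ((hsubX k l).trans (incl4 k m l))
        ((hsubX k l).trans (incl6 k m l)))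
        ((hsub k l).trans (incl7 k m l))
    · exact Finset.subset_inter (Finset.subset_inter
        ((hsubY k l).trans (incl5 k m l))
        ((hsub k l).trans (incl8 k m l)))
        ((hsubY k l).trans (incl9 k m l))
  -- converse compatibility
  have hcv' : ∀ k l, N' l k = fconv (N' k l) := by
    intro k l
    have hX : fconv (X k l) = Y l k := by
      show fconv (fcmp (N k p) (fcmp {α} (N q l))) = fcmp (N l q) (fcmp {cα} (N p k))
      rw [fconv_fcmp, fconv_fcmp, fconv_singleton, ← hcαdef, ← hN.cv q l,
        ← hN.cv k p, fcmp_assoc]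
    have hY : fconv (Y k l) = X l k := by
      show fconv (fcmp (N k q) (fcmp {cα} (N p l))) = fcmp (N l p) (fcmp {α} (N q k))
      rw [fconv_fcmp, fconv_fcmp, fconv_singleton, hccα, ← hN.cv p l,
        ← hN.cv k q, fcmp_assoc]
    show N l k ∩ X l k ∩ Y l k = fconv (N k l ∩ X k l ∩ Y k l)
    rw [fconv_inter, fconv_inter, hX, hY, ← hN.cv k l, Finset.inter_right_comm]
  -- diagonal
  have hdiag' : ∀ k, N' k k = {RCC5Basic.EQ} := by
    intro k
    have h1 : N' k k ⊆ {RCC5Basic.EQ} := by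
      rw [← hN.diag k]; exact hsub k k
    rcases Finset.subset_singleton_iff.mp h1 with h | h
    · exact absurd h (Finset.nonempty_iff_ne_empty.mp (hne' k k))
    · exact h
  -- the refined edge
  have hpq' : N' p q = {α} := by
    have h1 : N' p q ⊆ {α} := by
      refine (hsubX p q).trans ?_
      rw [hXdef]
      simp only
      rw [hN.diag p, hN.diag q, fcmp_EQ_left, fcmp_EQ_right]
    rcases Finset.subset_singleton_iff.mp h1 with h | h
    · exact absurd h (Finset.nonempty_iff_ne_empty.mp (hne' p q))
    · exact h
  refine ⟨N', ⟨hne', hdiag', fun i j => hcv' i j, fun i j k => hpc' i k j, hSN'⟩, hsub, hpq'⟩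

/-- The measure of a finite network. -/
def msr {n : ℕ} (N : Fin n → Fin n → Finset RCC5Basic) : ℕ :=
  ∑ x : Fin n × Fin n, (N x.1 x.2).card

/-- Every good network refines to an atomic path-consistent scenario. -/
lemma exists_scenario {n : ℕ} (h𝒮 : IsDistributiveSubalgebra 𝒮)
    (N : Fin n → Fin n → Finset RCC5Basic) (hN : GN 𝒮 N) :
    ∃ s : Fin n → Fin n → RCC5Basic,
      (∀ i j, s i j ∈ N i j) ∧ (∀ i j k, s i j ∈ tab (s i k) (s k j)) := by
  suffices H : ∀ m (N : Fin n → Fin n → Finset RCC5Basic), msr N = m → GN 𝒮 N →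
      ∃ s : Fin n → Fin n → RCC5Basic,
        (∀ i j, s i j ∈ N i j) ∧ (∀ i j k, s i j ∈ tab (s i k) (s k j)) from
    H (msr N) N rfl hN
  intro m
  induction m using Nat.strong_induction_on with
  | _ m IH =>
    intro N hm hN
    by_cases hsing : ∀ i j, (N i j).card ≤ 1
    · choose s hs using fun i j => hN.ne i j
      have hNij : ∀ i j, N i j = {s i j} := by
        intro i j
        obtain ⟨a, ha⟩ := Finset.card_eq_one.mp
          (le_antisymm (hsing i j) (Finset.card_pos.mpr (hN.ne i j)))
        have h2 := hs i j
        rw [ha, Finset.mem_singleton] at h2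
        rw [ha, h2]
      refine ⟨s, hs, ?_⟩
      intro i j k
      have h3 := hN.pc i j k (hs i j)
      rw [hNij i k, hNij k j, fcmp_singleton] at h3
      exact h3
    · push_neg at hsing
      obtain ⟨p, q, hpq⟩ := hsing
      obtain ⟨α, hα⟩ := hN.ne p q
      obtain ⟨N', hN', hsub, hpq'⟩ := step h𝒮 hN hα
      have hlt : msr N' < msr N := by
        apply Finset.sum_lt_sum
        · intro x _
          exact Finset.card_le_card (hsub x.1 x.2)
        · refine ⟨(p, q), Finset.mem_univ _, ?_⟩
          show (N' p q).card < (N p q).card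
          rw [hpq', Finset.card_singleton]
          omega
      obtain ⟨s, hs1, hs2⟩ := IH (msr N') (hm ▸ hlt) N' rfl hN'
      exact ⟨s, fun i j => hsub i j (hs1 i j), hs2⟩

end Refinement

/-! #### From an atomic path-consistent scenario to a solution by regions -/

section Scenario

open RCC5Basic

variable {n : ℕ} {s : Fin n → Fin n → RCC5Basic}

-- decidable facts about the table used in the construction
lemma pe_trans : ∀ a b c : RCC5Basic, (a = PP ∨ a = EQ) → (b = PP ∨ b = EQ) →
    c ∈ tab a b → (c = PP ∨ c = EQ) := by decide

lemma pe_anti : ∀ a : RCC5Basic, (a = PP ∨ a = EQ) →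
    (RCC5Basic.conv a = PP ∨ RCC5Basic.conv a = EQ) → a = EQ := by decide

lemma tab_EQ_mem : ∀ a c : RCC5Basic, c ∈ tab a EQ → c = a := by decide

lemma dr1 : ∀ u v w : RCC5Basic, (u = PP ∨ u = EQ) → (v = PP ∨ v = EQ) →
    w ∈ tab (RCC5Basic.conv u) v → w ≠ DR := by decide

lemma dr2 : ∀ v w : RCC5Basic, (v = PP ∨ v = EQ) → w ∈ tab PO v →
    (w = PO ∨ w = PP) := by decide

lemma dr3 : ∀ u w c : RCC5Basic, (u = PP ∨ u = EQ) → (w = PO ∨ w = PP) →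
    c ∈ tab (RCC5Basic.conv u) w → c ≠ DR := by decide

/-- "part of or equal" in the scenario. -/
def Ph (s : Fin n → Fin n → RCC5Basic) (i j : Fin n) : Prop := s i j = PP ∨ s i j = EQ

instance (i j : Fin n) : Decidable (Ph s i j) := by unfold Ph; infer_instance

lemma hconv (hpc : ∀ i j k, s i j ∈ tab (s i k) (s k j)) (hdiag : ∀ i, s i i = EQ) (i j : Fin n) : s j i = RCC5Basic.conv (s i j) := by
  have h := hpc i i j
  rw [hdiag i] at h
  exact EQ_mem_tab (s i j) (s j i) h

lemma Ph_refl (hdiag : ∀ i, s i i = EQ) (i : Fin n) : Ph s i i := Or.inr (hdiag i)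

lemma Ph_trans (hpc : ∀ i j k, s i j ∈ tab (s i k) (s k j)) {i j k : Fin n} (h1 : Ph s i j) (h2 : Ph s j k) : Ph s i k :=
  pe_trans _ _ _ h1 h2 (hpc i k j)

lemma Ph_anti (hpc : ∀ i j k, s i j ∈ tab (s i k) (s k j)) (hdiag : ∀ i, s i i = EQ) {i j : Fin n} (h1 : Ph s i j) (h2 : Ph s j i) : s i j = EQ := by
  refine pe_anti _ h1 ?_
  rwa [← hconv hpc hdiag i j]

/-- The atoms assigned to variable `i`. -/
def SSet (s : Fin n → Fin n → RCC5Basic) (i : Fin n) :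
    Finset (Sum (Fin n) (Fin n × Fin n)) :=
  (Finset.univ.filter fun m => Ph s m i).image Sum.inl ∪
  (Finset.univ.filter fun kl : Fin n × Fin n =>
    s kl.1 kl.2 = PO ∧ (Ph s kl.1 i ∨ Ph s kl.2 i)).image Sum.inr

lemma mem_SSet_inl {i m : Fin n} : Sum.inl m ∈ SSet s i ↔ Ph s m i := by
  simp [SSet]

lemma mem_SSet_inr {i : Fin n} {kl : Fin n × Fin n} :
    Sum.inr kl ∈ SSet s i ↔ s kl.1 kl.2 = PO ∧ (Ph s kl.1 i ∨ Ph s kl.2 i) := by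
  simp [SSet]

lemma SSet_nonempty (hdiag : ∀ i, s i i = EQ) (i : Fin n) : (SSet s i).Nonempty :=
  ⟨Sum.inl i, mem_SSet_inl.mpr (Ph_refl hdiag i)⟩

lemma SSet_mono (hpc : ∀ i j k, s i j ∈ tab (s i k) (s k j)) {i j : Fin n} (h : Ph s i j) : SSet s i ⊆ SSet s j := by
  intro x hx
  rcases x with m | kl
  · rw [mem_SSet_inl] at hx ⊢
    exact Ph_trans hpc hx h
  · rw [mem_SSet_inr] at hx ⊢
    exact ⟨hx.1, hx.2.imp (fun h' => Ph_trans hpc h' h) (fun h' => Ph_trans hpc h' h)⟩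

lemma SSet_proper (hpc : ∀ i j k, s i j ∈ tab (s i k) (s k j)) (hdiag : ∀ i, s i i = EQ) {i j : Fin n} (hij : s i j = PP) : Sum.inl j ∉ SSet s i := by
  rw [mem_SSet_inl]
  intro hji
  have := Ph_anti hpc hdiag (Or.inl hij) hji
  rw [hij] at this
  exact absurd this (by decide)

/-- The key verification: the scenario relations hold between the atom sets. -/
lemma SSet_fsi (hpc : ∀ i j k, s i j ∈ tab (s i k) (s k j)) (hdiag : ∀ i, s i i = EQ) (i j : Fin n) : fsi (s i j) (SSet s i) (SSet s j) := by
  have hcv := hconv hpc hdiag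
  rcases hs : s i j with _ | _ | _ | _ | _
  · -- DR
    show SSet s i ∩ SSet s j = ∅
    rw [Finset.eq_empty_iff_forall_notMem]
    intro x hx
    obtain ⟨hx1, hx2⟩ := Finset.mem_inter.mp hx
    have key : ∀ m : Fin n, Ph s m i → Ph s m j → False := by
      intro m h1 h2
      refine dr1 (s m i) (s m j) (s i j) h1 h2 ?_ hs
      rw [← hcv m i]
      exact hpc i j m
    rcases x with m | kl
    · exact key m (mem_SSet_inl.mp hx1) (mem_SSet_inl.mp hx2)
    · obtain ⟨k, l⟩ := kl
      obtain ⟨hkl, hi⟩ := mem_SSet_inr.mp hx1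
      obtain ⟨-, hj⟩ := mem_SSet_inr.mp hx2
      have cross : ∀ u v : Fin n, s u v = PO → Ph s u i → Ph s v j → False := by
        intro u v huv hui hvj
        have h1 : s u j ∈ tab (s u v) (s v j) := hpc u j v
        rw [huv] at h1
        have h2 := dr2 (s v j) (s u j) hvj h1
        refine dr3 (s u i) (s u j) (s i j) hui h2 ?_ hs
        rw [← hcv u i]
        exact hpc i j u
      rcases hi with hki | hli <;> rcases hj with hkj | hlj
      · exact key k hki hkj
      · exact cross k l hkl hki hlj
      · have hlk : s l k = PO := by rw [hcv k l, hkl]; rfl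
        exact cross l k hlk hli hkj
      · exact key l hli hlj
  · -- PO
    refine ⟨⟨Sum.inr (i, j), Finset.mem_inter.mpr ⟨?_, ?_⟩⟩, ?_, ?_⟩
    · exact mem_SSet_inr.mpr ⟨hs, Or.inl (Ph_refl hdiag i)⟩
    · exact mem_SSet_inr.mpr ⟨hs, Or.inr (Ph_refl hdiag j)⟩
    · intro hsub
      have := mem_SSet_inl.mp (hsub (mem_SSet_inl.mpr (Ph_refl hdiag i)))
      simp only [Ph, hs] at this
      exact absurd this (by decide)
    · intro hsub
      have := mem_SSet_inl.mp (hsub (mem_SSet_inl.mpr (Ph_refl hdiag j)))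
      have hji : s j i = PO := by rw [hcv i j, hs]; rfl
      simp only [Ph, hji] at this
      exact absurd this (by decide)
  · -- PP
    refine ⟨SSet_mono hpc (Or.inl hs), ?_⟩
    intro heq
    exact SSet_proper hpc hdiag hs
      (heq ▸ mem_SSet_inl.mpr (Ph_refl hdiag j))
  · -- PPi
    have hji : s j i = PP := by rw [hcv i j, hs]; rfl
    refine ⟨SSet_mono hpc (Or.inl hji), ?_⟩
    intro heq
    exact SSet_proper hpc hdiag hji
      (heq ▸ mem_SSet_inl.mpr (Ph_refl hdiag i))
  · -- EQ
    have hji : s j i = EQ := by rw [hcv i j, hs]; rfl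
    exact Finset.Subset.antisymm (SSet_mono hpc (Or.inr hs)) (SSet_mono hpc (Or.inr hji))

end Scenario

/-! #### Transfer along an injection into ℕ -/

lemma fsi_image {γ : Type*} [DecidableEq γ] {e : γ → ℕ} (he : Function.Injective e)
    {b : RCC5Basic} {A B : Finset γ} (h : fsi b A B) :
    fsi b (A.image e) (B.image e) := by
  have himg : ∀ F G : Finset γ, F.image e = G.image e → F = G := by
    intro F G hFG
    ext a
    constructor
    · intro ha
      obtain ⟨a', ha', hee⟩ := Finset.mem_image.mp (hFG ▸ Finset.mem_image_of_mem e ha)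
      rwa [he hee] at ha'
    · intro ha
      obtain ⟨a', ha', hee⟩ := Finset.mem_image.mp (hFG.symm ▸ Finset.mem_image_of_mem e ha)
      rwa [he hee] at ha'
  cases b
  · show (A.image e) ∩ (B.image e) = ∅
    rw [← Finset.image_inter _ _ he, h]
    rfl
  · obtain ⟨h1, h2, h3⟩ := h
    refine ⟨?_, ?_, ?_⟩
    · rw [← Finset.image_inter _ _ he]
      exact h1.image e
    · intro hc; exact h2 ((Finset.image_subset_image_iff he).mp hc)
    · intro hc; exact h3 ((Finset.image_subset_image_iff he).mp hc)
  · exact ⟨Finset.image_subset_image h.1, fun hc => h.2 (himg _ _ hc)⟩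
  · exact ⟨Finset.image_subset_image h.1, fun hc => h.2 (himg _ _ hc)⟩
  · show A.image e = B.image e
    rw [h]
end RCC5Aux

/-- A path-consistent RCC5 network over a distributive subalgebra is consistent. -/
theorem path_consistent_over_distributive_is_consistent {n : ℕ} (𝒮 : Set RCC5Rel)
    (h𝒮 : IsDistributiveSubalgebra 𝒮) (Γ : RCC5Network n) (hover : Γ.Over 𝒮)
    (hpc : Γ.PathConsistent) :
    Γ.Consistent := by
  classical
  set N : Fin n → Fin n → Finset RCC5Basic :=
    fun i j => (Set.toFinite (Γ.rel i j)).toFinset with hNdef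
  have hcoe : ∀ i j, ↑(N i j) = Γ.rel i j := fun i j => Set.Finite.coe_toFinset _
  have hN : RCC5Aux.GN 𝒮 N := by
    refine ⟨?_, ?_, ?_, ?_, ?_⟩
    · intro i j
      exact (Set.Finite.toFinset_nonempty _).mpr (hpc i j i).1
    · intro i
      apply Finset.coe_injective
      rw [hcoe, Γ.diag i, Finset.coe_singleton]
    · intro i j
      apply Finset.coe_injective
      rw [hcoe, Γ.conv_rel i j, ← hcoe i j, ← RCC5Aux.coe_fconv]
    · intro i j k c hc
      have h2 := (hpc i j k).2
      have h3 : c ∈ Γ.rel i j := by rw [← hcoe]; exact_mod_cast hc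
      have h4 := h2 h3
      rw [← hcoe i k, ← hcoe k j, RCC5Aux.coe_fcmp] at h4
      exact_mod_cast h4
    · intro i j
      rw [hcoe]
      exact hover i j
  obtain ⟨s, hs1, hs2⟩ := RCC5Aux.exists_scenario h𝒮 N hN
  have hdiag : ∀ i, s i i = RCC5Basic.EQ := by
    intro i
    have h5 := hs1 i i
    rwa [hN.diag i, Finset.mem_singleton] at h5
  have he : Function.Injective (Encodable.encode (α := Sum (Fin n) (Fin n × Fin n))) :=
    Encodable.encode_injective
  set A : Fin n → Finset ℕ :=
    fun i => (RCC5Aux.SSet s i).image Encodable.encode with hAdef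
  have hAne : ∀ i, (A i).Nonempty :=
    fun i => (RCC5Aux.SSet_nonempty hdiag i).image Encodable.encode
  refine ⟨fun i => RCC5Aux.Reg (A i), ?_⟩
  intro i j
  refine ⟨s i j, ?_, ?_⟩
  · rw [← hcoe i j]
    exact_mod_cast hs1 i j
  · exact RCC5Aux.interp_of_fsi (hAne i) (hAne j)
      (RCC5Aux.fsi_image he (RCC5Aux.SSet_fsi hs2 hdiag i j))
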